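/- Let T be a Hausdorff topological group acting continuously on a compact Hausdorff space X, let x ∈ X be an almost periodic point for the action of T, and let H be a normal co-compact closed subgroup of T. Then E_x[H] = E_y[H] for every y ∈ cl(H·x). -/

import Mathlib

open MulAction Pointwise

/-!
The point is that `Y = cl(H·x)` is a minimal closed `H`-invariant set. By Zorn's lemma `Y`
contains a minimal set `M = cl(H·m)`. Almost periodicity of `x` puts `x` in the `T`-orbit closure
of `m`, and since `T ⧸ H` is compact, `{w | ∃ t, t⁻¹ • w ∈ M}` is closed (a projection along
`T ⧸ H`), so `x ∈ t • M` for some `t`. By normality `t • M` is again minimal, so `Y = t • M`.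
Finally, for every `z` in a minimal set `Y`, `t • z ∈ Y` iff `t • Y = Y`, so `E_z[H]` is the
stabilizer of `Y = cl(H·y)` for each `y ∈ Y`.
-/

/-- A subset `A` of a topological group `G` is *syndetic* if `K⁻¹ * A = G`
for some compact set `K ⊆ G`. -/
def Syndetic {G : Type*} [Group G] [TopologicalSpace G] (A : Set G) : Prop :=
  ∃ K : Set G, IsCompact K ∧ K⁻¹ * A = Set.univ

/-- A point `x` is *almost periodic* for the action of `G` if for every neighborhood `U`
of `x` the return-time set `{g | g • x ∈ U}` is syndetic in `G`. -/
def IsAlmostPeriodicPt (G : Type*) {X : Type*} [Group G] [TopologicalSpace G]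
    [TopologicalSpace X] [MulAction G X] (x : X) : Prop :=
  ∀ U ∈ nhds x, Syndetic {g : G | g • x ∈ U}

/-- For nonempty `M` this says that `M` is a minimal nonempty closed invariant set. -/
def IsMinimalSet (G : Type*) {X : Type*} [Monoid G] [TopologicalSpace X] [MulAction G X]
    (M : Set X) : Prop :=
  ∀ z ∈ M, closure (orbit G z) = M

section Minimal

variable {G X : Type*} [Monoid G] [TopologicalSpace X] [MulAction G X] [ContinuousConstSMul G X]

theorem exists_isMinimalSet_closure_orbit [CompactSpace X] {Y : Set X} (hY : IsClosed Y)
    (hne : Y.Nonempty) (hinv : ∀ g : G, g • Y ⊆ Y) :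
    ∃ m ∈ Y, IsMinimalSet G (closure (orbit G m)) := by
  let S : Set (Set X) := {M | M.Nonempty ∧ IsClosed M ∧ ∀ g : G, g • M ⊆ M}
  have hchain : ∀ c ⊆ S, IsChain (· ⊆ ·) c → c.Nonempty → ∃ lb ∈ S, ∀ M ∈ c, lb ⊆ M := by
    intro c hcS hc hcne
    have := hcne.to_subtype
    refine ⟨⋂₀ c, ⟨?_, isClosed_sInter fun M hM ↦ (hcS hM).2.1, fun g ↦ ?_⟩,
      fun M hM ↦ Set.sInter_subset_of_mem hM⟩
    · refine IsCompact.nonempty_sInter_of_directed_nonempty_isCompact_isClosed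
        (fun M hM N hN ↦ (hc.total hM hN).elim (fun h ↦ ⟨M, hM, le_rfl, h⟩)
          fun h ↦ ⟨N, hN, h, le_rfl⟩)
        (fun M hM ↦ (hcS hM).1) (fun M hM ↦ (hcS hM).2.1.isCompact) fun M hM ↦ (hcS hM).2.1
    · rintro _ ⟨p, hp, rfl⟩
      exact Set.mem_sInter.2 fun M hM ↦ (hcS hM).2.2 g ⟨p, Set.mem_sInter.1 hp M hM, rfl⟩
  obtain ⟨M, hMY, hMmin⟩ := zorn_superset_nonempty S hchain Y ⟨hne, hY, hinv⟩
  obtain ⟨⟨m, hm⟩, hMclosed, hMinv⟩ := hMmin.prop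
  have hclosure : ∀ z ∈ M, closure (orbit G z) ⊆ M := fun z hz ↦
    closure_minimal (by rintro _ ⟨g, rfl⟩; exact hMinv g ⟨z, hz, rfl⟩) hMclosed
  have hmin : IsMinimalSet G M := fun z hz ↦ (hclosure z hz).antisymm <|
    hMmin.2 ⟨⟨z, subset_closure (mem_orbit_self z)⟩, isClosed_closure,
      fun g ↦ smul_closure_orbit_subset g z⟩ (hclosure z hz)
  exact ⟨m, hMY hm, hmin m hm ▸ hmin⟩

end Minimal

section Normal

variable {T X : Type*} [Group T] [TopologicalSpace X] [MulAction T X] [ContinuousConstSMul T X]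
  (H : Subgroup T) [H.Normal]

theorem closure_orbit_smul (t : T) (z : X) :
    closure (orbit H (t • z)) = t • closure (orbit H z) := by
  rw [← closure_smul, smul_orbit_eq_orbit_smul]

theorem IsMinimalSet.smul {M : Set X} (hM : IsMinimalSet H M) (t : T) :
    IsMinimalSet H (t • M) := by
  rintro _ ⟨z, hz, rfl⟩
  rw [closure_orbit_smul, hM z hz]

theorem IsMinimalSet.smul_mem_iff {M : Set X} (hM : IsMinimalSet H M) {z : X} (hz : z ∈ M)
    (t : T) : t • z ∈ M ↔ t • M = M := by
  have htM : t • M = closure (orbit H (t • z)) := by rw [closure_orbit_smul, hM z hz]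
  exact ⟨fun htz ↦ htM.trans (hM _ htz), fun h ↦ h ▸ Set.smul_mem_smul_set hz⟩

end Normal

section Quotient

variable {T X : Type*} [Group T] [TopologicalSpace T] [IsTopologicalGroup T] [TopologicalSpace X]
  {H : Subgroup T} [CompactSpace (T ⧸ H)]

theorem isClosed_image_snd_of_compactSpace_quotient {F : Set (T × X)} (hF : IsClosed F)
    (hsat : ∀ p ∈ F, ∀ h ∈ H, (p.1 * h, p.2) ∈ F) : IsClosed (Prod.snd '' F) := by
  let q : T × X → (T ⧸ H) × X := Prod.map (↑) id
  have hq : IsOpenQuotientMap q := QuotientGroup.isOpenQuotientMap_mk.prodMap .id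
  have hpre : q ⁻¹' (q '' F) = F := by
    refine (Set.subset_preimage_image q F).antisymm' ?_
    rintro ⟨t, w⟩ ⟨⟨s, w'⟩, hs, heq⟩
    obtain ⟨hst, rfl : w' = w⟩ := Prod.ext_iff.1 heq
    simpa using hsat _ hs _ (QuotientGroup.eq.1 hst)
  have hqF : IsClosed (q '' F) :=
    hq.isQuotientMap.isCoinducing.isClosed_preimage.1 (by rwa [hpre])
  simpa [q, Set.image_image] using isClosedMap_snd_of_compactSpace _ hqF

variable [MulAction T X] [ContinuousSMul T X]

theorem exists_mem_smul_of_mem_closure_orbit {M : Set X} (hM : IsClosed M)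
    (hinv : ∀ h : H, h • M ⊆ M) {m x : X} (hm : m ∈ M) (hx : x ∈ closure (orbit T m)) :
    ∃ t : T, x ∈ t • M := by
  let F : Set (T × X) := {p | p.1⁻¹ • p.2 ∈ M}
  have hF : IsClosed F := hM.preimage (continuous_fst.inv.smul continuous_snd)
  have hsat : ∀ p ∈ F, ∀ h ∈ H, (p.1 * h, p.2) ∈ F := fun p hp h hh ↦ by
    simpa [F, mul_smul] using hinv ⟨h⁻¹, H.inv_mem hh⟩ (Set.smul_mem_smul_set hp)
  have horbit : orbit T m ⊆ Prod.snd '' F := by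
    rintro _ ⟨t, rfl⟩
    exact ⟨(t, t • m), by simpa [F] using hm, rfl⟩
  obtain ⟨⟨t, _⟩, ht, rfl⟩ := closure_minimal horbit
    (isClosed_image_snd_of_compactSpace_quotient hF hsat) hx
  exact ⟨t, Set.mem_smul_set_iff_inv_smul_mem.2 ht⟩

end Quotient

section AlmostPeriodic

variable {T X : Type*} [Group T] [TopologicalSpace T] [IsTopologicalGroup T] [TopologicalSpace X]
  [MulAction T X] [ContinuousSMul T X] {x : X}

theorem IsAlmostPeriodicPt.mem_closure_orbit [RegularSpace X] (hx : IsAlmostPeriodicPt T x)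
    {y : X} (hy : y ∈ closure (orbit T x)) : x ∈ closure (orbit T y) := by
  refine mem_closure_iff_nhds.2 fun V hV ↦ ?_
  obtain ⟨C, hC, hCclosed, hCV⟩ := exists_mem_nhds_isClosed_subset hV
  obtain ⟨K, hK, hKC⟩ := hx C hC
  have horbit : orbit T x ⊆ K⁻¹ • C := by
    rintro _ ⟨t, rfl⟩
    obtain ⟨k, hk, s, hs, rfl⟩ : t ∈ K⁻¹ * {g : T | g • x ∈ C} := hKC ▸ Set.mem_univ t
    show (k * s) • x ∈ _
    rw [mul_smul]
    exact Set.smul_mem_smul hk hs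
  obtain ⟨k, hk, c, hc, hyc⟩ := closure_minimal horbit (hCclosed.smul_left_of_isCompact hK.inv) hy
  exact ⟨c, hCV hc, k⁻¹, by simp [← hyc]⟩

theorem IsAlmostPeriodicPt.isMinimalSet_closure_orbit [CompactSpace X] [RegularSpace X]
    (hx : IsAlmostPeriodicPt T x) (H : Subgroup T) [H.Normal] [CompactSpace (T ⧸ H)] :
    IsMinimalSet H (closure (orbit H x)) := by
  obtain ⟨m, hm, hmin⟩ := exists_isMinimalSet_closure_orbit (G := ↥H) isClosed_closure
    ⟨x, subset_closure (mem_orbit_self x)⟩ (smul_closure_orbit_subset · x)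
  have hxm : x ∈ closure (orbit T m) :=
    hx.mem_closure_orbit (closure_mono (orbit_subgroup_subset H x) hm)
  obtain ⟨t, hxt⟩ := exists_mem_smul_of_mem_closure_orbit (H := H) isClosed_closure
    (smul_closure_orbit_subset · m) (subset_closure (mem_orbit_self m)) hxm
  rw [hmin.smul H t x hxt]
  exact hmin.smul H t

end AlmostPeriodic

theorem envelope_eq_on_orbitClosure_general
    {T X : Type*} [Group T] [TopologicalSpace T] [IsTopologicalGroup T]
    [TopologicalSpace X] [CompactSpace X] [T2Space X] [MulAction T X] [ContinuousSMul T X]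
    (x : X) (hx : IsAlmostPeriodicPt T x)
    (H : Subgroup T) [H.Normal]
    (hcc : CompactSpace (T ⧸ H)) :
    ∀ y ∈ closure (orbit H x),
      {t : T | t • x ∈ closure (orbit H x)} = {t : T | t • y ∈ closure (orbit H y)} := by
  intro y hy
  have hmin := hx.isMinimalSet_closure_orbit H
  ext t
  change t • x ∈ closure (orbit H x) ↔ t • y ∈ closure (orbit H y)
  rw [hmin y hy,
    hmin.smul_mem_iff H (subset_closure (mem_orbit_self x)), hmin.smul_mem_iff H hy]

/-- If `x` is an almost periodic point for the `T`-action and `H` is a normal co-compact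
closed subgroup of `T`, then `E_x[H] = E_y[H]` for every `y ∈ cl(H·x)`. -/
theorem envelope_eq_on_orbitClosure
    {T X : Type*} [Group T] [TopologicalSpace T] [IsTopologicalGroup T] [T2Space T]
    [TopologicalSpace X] [CompactSpace X] [T2Space X] [MulAction T X] [ContinuousSMul T X]
    (x : X) (hx : IsAlmostPeriodicPt T x)
    (H : Subgroup T) [H.Normal] (hHclosed : IsClosed (H : Set T))
    (hcc : CompactSpace (T ⧸ H)) :
    ∀ y ∈ closure (orbit H x),
      {t : T | t • x ∈ closure (orbit H x)} = {t : T | t • y ∈ closure (orbit H y)} :=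
  envelope_eq_on_orbitClosure_general x hx H hcc
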